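/- arXiv:2602.08848 — 2 statements merged into one kernel-verified Lean document; each statement's English description precedes it below -/
import Mathlib

section
/- Let F = (A, U, I) be a sequential formalism, and let S be a subset of the multi-algebra A that is ↱-closed, closed under the operation (R∘R')∧R'', and such that every algebraically consistent network over S is satisfiable. Then S is algebraically tractable: a network over S is satisfiable iff its algebraic closure is not trivially inconsistent. -/
open scoped Classical

/-- An atom (basic relation) of a Boolean algebra: a nonzero element `b` such that
for every `r`, `r ⊓ b = b` or `r ⊓ b = ⊥`. -/
def IsAtomRel {α : Type*} [BooleanAlgebra α] (b : α) : Prop :=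
  b ≠ ⊥ ∧ ∀ r : α, r ⊓ b = b ∨ r ⊓ b = ⊥

/-- The finset of atoms below `r` (`r ⊆ r'` means `r ⊔ r' = r'`, i.e. `r ≤ r'`). -/
noncomputable def atomsBelow {α : Type*} [BooleanAlgebra α] [Fintype α] (r : α) : Finset α :=
  Finset.univ.filter fun b => IsAtomRel b ∧ b ≤ r

/-- A non-associative relation algebra: a Boolean algebra with composition,
converse and identity satisfying the usual axioms (incl. the Peircean law). -/
structure NA (α : Type*) [BooleanAlgebra α] where
  comp : α → α → α
  conv : α → α
  e : α
  conv_conv : ∀ x, conv (conv x) = x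
  conv_sup : ∀ x y, conv (x ⊔ y) = conv x ⊔ conv y
  conv_comp : ∀ x y, conv (comp x y) = comp (conv y) (conv x)
  comp_e : ∀ x, comp x e = x
  e_comp : ∀ x, comp e x = x
  comp_sup : ∀ x y z, comp x (y ⊔ z) = comp x y ⊔ comp x z
  peirce : ∀ x y z, comp x y ⊓ conv z = ⊥ ↔ comp y z ⊓ conv x = ⊥

/-- Relational composition of sets of pairs. -/
def relComp {U : Type*} (R S : Set (U × U)) : Set (U × U) :=
  {p | ∃ y, (p.1, y) ∈ R ∧ (y, p.2) ∈ S}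

/-- A symmetric qualitative formalism `(A, U, φ)`. -/
structure SQF (α : Type*) [BooleanAlgebra α] [Fintype α] (U : Type*) extends NA α where
  nonempty_univ : Nonempty U
  φ : α → Set (U × U)
  φ_bot : φ ⊥ = ∅
  φ_conv : ∀ r, φ (conv r) = {p | (p.2, p.1) ∈ φ r}
  φ_inf : ∀ r r', φ (r ⊓ r') = φ r ∩ φ r'
  φ_sup : ∀ r r', φ (r ⊔ r') = φ r ∪ φ r'
  φ_comp : ∀ r r', relComp (φ r) (φ r') ∩ φ ⊤ ⊆ φ (comp r r')

/-- A projection operator between two non-associative relation algebras. -/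
structure ProjOp {α β : Type*} [BooleanAlgebra α] [BooleanAlgebra β]
    (A : NA α) (B : NA β) where
  f : α → β
  map_sup : ∀ r r', f (r ⊔ r') = f r ⊔ f r'
  map_conv : ∀ r, f (A.conv r) = B.conv (f r)

/-- A multi-algebra: a family of finite non-associative relation algebras together
with projection operators between any two distinct components. -/
structure MultiAlg (ι : Type*) [Fintype ι] (α : ι → Type*)
    [∀ i, BooleanAlgebra (α i)] [∀ i, Fintype (α i)] where
  na : ∀ i, NA (α i)
  proj : ∀ i j, i ≠ j → α i → α j
  proj_sup : ∀ i j (h : i ≠ j) (r r' : α i),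
    proj i j h (r ⊔ r') = proj i j h r ⊔ proj i j h r'
  proj_conv : ∀ i j (h : i ≠ j) (r : α i),
    proj i j h ((na i).conv r) = (na j).conv (proj i j h r)

namespace MultiAlg

variable {ι : Type*} [Fintype ι] {α : ι → Type*} [∀ i, BooleanAlgebra (α i)]
  [∀ i, Fintype (α i)]

/-- Componentwise composition of multi-algebra relations. -/
def comp (M : MultiAlg ι α) (R R' : ∀ i, α i) : ∀ i, α i :=
  fun i => (M.na i).comp (R i) (R' i)

/-- Componentwise converse of multi-algebra relations. -/
def conv (M : MultiAlg ι α) (R : ∀ i, α i) : ∀ i, α i :=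
  fun i => (M.na i).conv (R i)

/-- A basic relation is a tuple of atoms. -/
def Basic (M : MultiAlg ι α) (R : ∀ i, α i) : Prop := ∀ i, IsAtomRel (R i)

/-- `R` is closed under projection: `Rⱼ ⊆ ↱ⁱʲ(Rᵢ)` for all distinct `i, j`. -/
def RelClosedProj (M : MultiAlg ι α) (R : ∀ i, α i) : Prop :=
  ∀ i j (h : i ≠ j), R j ≤ M.proj i j h (R i)

/-- One pass of the projection-closure iteration: replace each `Rⱼ` by
`Rⱼ ⊓ ↱ⁱʲ(Rᵢ)` for all `i ≠ j`. -/
noncomputable def pstep (M : MultiAlg ι α) (R : ∀ i, α i) : ∀ i, α i :=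
  fun j => R j ⊓ Finset.univ.inf fun i => if h : i ≠ j then M.proj i j h (R i) else ⊤

/-- The projection closure `↱R`, obtained by iterating the refinement step
until a fixed point is reached (reached after at most `card` steps). -/
noncomputable def pcl (M : MultiAlg ι α) (R : ∀ i, α i) : ∀ i, α i :=
  M.pstep^[Fintype.card (∀ i, α i)] R

/-- A relation is `↱`-consistent if it is closed under projection and
not trivially inconsistent. -/
def PConsistent (M : MultiAlg ι α) (R : ∀ i, α i) : Prop :=
  M.RelClosedProj R ∧ ∀ i, R i ≠ ⊥

/-- The inverse projection operator `↰ⁱʲ` of `↱ⁱʲ`, defined on atoms by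
`b ≤ ↰ⁱʲ(b')` iff `b' ≤ ↱ⁱʲ(b)` and extended by union. -/
noncomputable def iproj (M : MultiAlg ι α) (i j : ι) (h : i ≠ j) (r : α j) : α i :=
  (Finset.univ.filter fun b : α i =>
    IsAtomRel b ∧ ∃ b' : α j, IsAtomRel b' ∧ b' ≤ r ∧ b' ≤ M.proj i j h b).sup id

/-- `PathUp M E i j l x y`: following the directed path `l = [i, …, j]` of edges of `E`
upwards, the composite of the direct projections along it maps `x : α i` to `y : α j`. -/
inductive PathUp (M : MultiAlg ι α) (E : ι → ι → Prop) : ∀ i j : ι, List ι → α i → α j → Prop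
  | refl (i : ι) (x : α i) : PathUp M E i i [i] x x
  | step {i j k : ι} {l : List ι} (e : E i j) (h : i ≠ j) (x : α i) {y : α k} :
      PathUp M E j k l (M.proj i j h x) y → PathUp M E i k (i :: l) x y

/-- `PathDown M E i j l x y`: following the path `l = [i, …, j]` downwards along
reversed edges of `E`, the composite of the inverse projections maps `x : α i` to
`y : α j`. -/
inductive PathDown (M : MultiAlg ι α) (E : ι → ι → Prop) : ∀ i j : ι, List ι → α i → α j → Prop
  | refl (i : ι) (x : α i) : PathDown M E i i [i] x x
  | step {i j k : ι} {l : List ι} (e : E j i) (h : j ≠ i) (x : α i) {y : α k} :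
      PathDown M E j k l (M.iproj j i h x) y → PathDown M E i k (i :: l) x y

end MultiAlg

/-- A plenary anti-tree structure on a multi-algebra: an anti-tree (a unique directed
path from every node to the root) on the components such that, along the (unique)
duplicate-free chain `i = k₀ → ⋯ → k_s ← ⋯ ← k_{s+t+1} = j` connecting two distinct
components, the composite of the direct projections going up and of the inverse
projections going down refines the direct projection `↱ⁱʲ` on every atom.
A multi-algebra admitting such a structure is a tree multi-algebra. -/
structure PlenaryAntiTree {ι : Type*} [Fintype ι] {α : ι → Type*}
    [∀ i, BooleanAlgebra (α i)] [∀ i, Fintype (α i)] (M : MultiAlg ι α) where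
  E : ι → ι → Prop
  root : ι
  unique_path : ∀ v : ι, v ≠ root →
    ∃! l : List ι, l.head? = some v ∧ l.getLast? = some root ∧ List.Chain' E l
  plenary : ∀ i j (hij : i ≠ j) (b : α i), IsAtomRel b →
    ∀ (w : ι) (lu ld : List ι) (y : α w) (z : α j),
      MultiAlg.PathUp M E i w lu b y → MultiAlg.PathDown M E w j ld y z →
      (lu ++ ld.tail).Nodup → z ≤ M.proj i j hij b

/-- A sequential formalism `(A, U, I)` over a multi-algebra. -/
structure SeqFormalism (ι : Type*) [Fintype ι] (α : ι → Type*)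
    [∀ i, BooleanAlgebra (α i)] [∀ i, Fintype (α i)] (U : Type*) where
  M : MultiAlg ι α
  I : (∀ i, α i) → Set (U × U)
  I_pcl : ∀ R, I (M.pcl R) = I R
  I_conv : ∀ R, I (M.conv R) = {p | (p.2, p.1) ∈ I R}
  I_bot : I ⊥ = ∅
  I_comp : ∀ R R', relComp (I R) (I R') ∩ I ⊤ ⊆ I (M.comp R R')
  I_inf : ∀ R R', I (R ⊓ R') = I R ∩ I R'
  I_basic : ∀ R, I R = ⋃ B ∈ {B : ∀ i, α i | M.Basic B ∧ B ≤ R}, I B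

section Networks

variable {ι : Type*} [Fintype ι] {α : ι → Type*} [∀ i, BooleanAlgebra (α i)]
  [∀ i, Fintype (α i)] {U : Type*} {V : Type*} [Fintype V]

/-- A network (over variables `V`) is trivially inconsistent if some component of some
constraint between distinct variables is `⊥`. -/
def NetTrivIncons (N : V → V → ∀ i, α i) : Prop := ∃ x y : V, x ≠ y ∧ ∃ i, N x y i = ⊥

/-- A scenario: all constraints between distinct variables are basic. -/
def Scenario (M : MultiAlg ι α) (N : V → V → ∀ i, α i) : Prop :=
  ∀ x y : V, x ≠ y → M.Basic (N x y)

/-- `N` refines `N'`. -/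
def Refines (N N' : V → V → ∀ i, α i) : Prop := ∀ x y : V, x ≠ y → N x y ≤ N' x y

/-- `u` is a solution of the network `N`. -/
def IsSolution (F : SeqFormalism ι α U) (N : V → V → ∀ i, α i) (u : V → U) : Prop :=
  ∀ x y : V, x ≠ y → (u x, u y) ∈ F.I (N x y)

/-- A network is satisfiable if it has a solution. -/
def NetSat (F : SeqFormalism ι α U) (N : V → V → ∀ i, α i) : Prop :=
  ∃ u : V → U, IsSolution F N u

/-- The network is closed under composition. -/
def ClosedComp (M : MultiAlg ι α) (N : V → V → ∀ i, α i) : Prop :=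
  ∀ x y z : V, x ≠ y → y ≠ z → x ≠ z → N x z ≤ M.comp (N x y) (N y z)

/-- The network is closed under projection. -/
def NetClosedProj (M : MultiAlg ι α) (N : V → V → ∀ i, α i) : Prop :=
  ∀ x y : V, x ≠ y → M.RelClosedProj (N x y)

/-- Algebraically closed: closed under composition and projection. -/
def AlgClosed (M : MultiAlg ι α) (N : V → V → ∀ i, α i) : Prop :=
  ClosedComp M N ∧ NetClosedProj M N

/-- Algebraically consistent: algebraically closed and not trivially inconsistent. -/
def AlgConsistent (M : MultiAlg ι α) (N : V → V → ∀ i, α i) : Prop :=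
  AlgClosed M N ∧ ¬ NetTrivIncons N

/-- One pass of the algebraic-closure iteration: close each constraint under projection
and refine it by all compositions `N^{xy} ∘ N^{yz}`. -/
noncomputable def aclStep (M : MultiAlg ι α) (N : V → V → ∀ i, α i) : V → V → ∀ i, α i :=
  fun x z => if x = z then N x z else
    M.pcl (N x z) ⊓ Finset.univ.inf fun y =>
      if x ≠ y ∧ y ≠ z then M.comp (N x y) (N y z) else ⊤

/-- The algebraic closure of a network: iterate the refinement operations until a
fixed point is reached. -/
noncomputable def acl (M : MultiAlg ι α) (N : V → V → ∀ i, α i) : V → V → ∀ i, α i :=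
  (aclStep M)^[Fintype.card (V → V → ∀ i, α i)] N

/-- Closing a network under projection only. -/
noncomputable def netProjClose (M : MultiAlg ι α) (N : V → V → ∀ i, α i) :
    V → V → ∀ i, α i :=
  fun x y => if x = y then N x y else M.pcl (N x y)

/-- One pass of the composition-closure iteration. -/
noncomputable def compStep (M : MultiAlg ι α) (N : V → V → ∀ i, α i) : V → V → ∀ i, α i :=
  fun x z => if x = z then N x z else
    N x z ⊓ Finset.univ.inf fun y =>
      if x ≠ y ∧ y ≠ z then M.comp (N x y) (N y z) else ⊤

/-- Closing a network under composition only. -/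
noncomputable def compClose (M : MultiAlg ι α) (N : V → V → ∀ i, α i) : V → V → ∀ i, α i :=
  (compStep M)^[Fintype.card (V → V → ∀ i, α i)] N

/-- A network over a subset `S` of the multi-algebra. -/
def NetworkOver (S : Set (∀ i, α i)) (N : V → V → ∀ i, α i) : Prop :=
  ∀ x y : V, x ≠ y → N x y ∈ S

end Networks

section Subsets

variable {ι : Type*} [Fintype ι] {α : ι → Type*} [∀ i, BooleanAlgebra (α i)]
  [∀ i, Fintype (α i)] {U : Type*}

/-- `S` is `↱`-closed: the projection closure of any relation of `S` is in `S`. -/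
def PclClosed (M : MultiAlg ι α) (S : Set (∀ i, α i)) : Prop :=
  ∀ R ∈ S, M.pcl R ∈ S

/-- `S` is `∘∧`-closed: `(R ∘ R') ∧ R'' ∈ S` for all `R, R', R'' ∈ S`. -/
def CompInfClosed (M : MultiAlg ι α) (S : Set (∀ i, α i)) : Prop :=
  ∀ R ∈ S, ∀ R' ∈ S, ∀ R'' ∈ S, (M.comp R R') ⊓ R'' ∈ S

/-- `S` is atomizable: every satisfiable relation of `S` contains a satisfiable
basic relation belonging to `S`. -/
def Atomizable (F : SeqFormalism ι α U) (S : Set (∀ i, α i)) : Prop :=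
  ∀ R ∈ S, F.I R ≠ ∅ → ∃ B ∈ S, F.M.Basic B ∧ B ≤ R ∧ F.I B ≠ ∅

/-- `S` is dissociable: closing any network over `S` under projection then under
composition yields a network that is algebraically consistent or trivially
inconsistent. -/
def Dissociable (M : MultiAlg ι α) (S : Set (∀ i, α i)) : Prop :=
  ∀ (V : Type) [Fintype V], ∀ N : V → V → ∀ i, α i, NetworkOver S N →
    AlgConsistent M (compClose M (netProjClose M N)) ∨
      NetTrivIncons (compClose M (netProjClose M N))

/-- `S` is algebraically tractable: a network over `S` is satisfiable iff its
algebraic closure is not trivially inconsistent. -/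
def AlgTractable (F : SeqFormalism ι α U) (S : Set (∀ i, α i)) : Prop :=
  ∀ (V : Type) [Fintype V], ∀ N : V → V → ∀ i, α i, NetworkOver S N →
    (NetSat F N ↔ ¬ NetTrivIncons (acl F.M N))

/-- The `i`-th slice of a subset of a multi-algebra. -/
def sliceSet (S : Set (∀ i, α i)) (i : ι) : Set (α i) := {r | ∃ R ∈ S, R i = r}

end Subsets

section SingleAlgebraNetworks

variable {β : Type*} [BooleanAlgebra β] [Fintype β]

/-- One pass of the (classical, single-algebra) composition-closure iteration. -/
noncomputable def sCompStep {V : Type*} [Fintype V] (na : NA β) (n : V → V → β) :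
    V → V → β :=
  fun x z => if x = z then n x z else
    n x z ⊓ Finset.univ.inf fun y =>
      if x ≠ y ∧ y ≠ z then na.comp (n x y) (n y z) else ⊤

/-- The (classical) algebraic closure of a network over a single algebra. -/
noncomputable def sCompClose {V : Type*} [Fintype V] (na : NA β) (n : V → V → β) :
    V → V → β :=
  (sCompStep na)^[Fintype.card (V → V → β)] n

/-- Closure under composition for a network over a single algebra. -/
def sClosedComp {V : Type*} (na : NA β) (n : V → V → β) : Prop :=
  ∀ x y z : V, x ≠ y → y ≠ z → x ≠ z → n x z ≤ na.comp (n x y) (n y z)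

/-- A classical subclass is minimal: the algebraic closure of any network over it is
the minimal network, i.e. every basic relation contained in a relation of the closure
extends to an algebraically closed scenario refining the closure. -/
def SliceMinimal (na : NA β) (Si : Set β) : Prop :=
  ∀ (V : Type) [Fintype V], ∀ n : V → V → β, (∀ x y : V, x ≠ y → n x y ∈ Si) →
    ∀ x y : V, x ≠ y → ∀ b : β, IsAtomRel b → b ≤ sCompClose na n x y →
      ∃ s : V → V → β, (∀ p q : V, p ≠ q → IsAtomRel (s p q)) ∧
        (∀ p q : V, p ≠ q → s p q ≤ sCompClose na n p q) ∧
        s x y = b ∧ sClosedComp na s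

end SingleAlgebraNetworks

/- Algebraic closure is a deflationary iteration, so it reaches a fixed point (an algebraically
closed network) within `card` steps. Each step intersects constraints with relations that every
solution already satisfies, so solutions are preserved; and each step is built from `↱` and
`(R ∘ R') ∧ R''`, so networks over `S` stay over `S`. Hence `N` is satisfiable iff `C(N)` is, and
when `C(N)` is not trivially inconsistent it is algebraically consistent over `S`, hence
satisfiable by assumption. -/

theorem Function.isFixedPt_iterate_card_of_le_id {γ : Type*} [Fintype γ] [PartialOrder γ]
    {f : γ → γ} (hf : f ≤ id) (x : γ) : IsFixedPt f (f^[Fintype.card γ] x) := by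
  have fixed_of_eq : ∀ a b : ℕ, a < b → f^[a] x = f^[b] x → IsFixedPt f (f^[a] x) := by
    intro a b hab heq
    rw [IsFixedPt, ← iterate_succ_apply' f]
    refine le_antisymm (antitone_iterate_of_le_id hf a.le_succ x) ?_
    rw [heq]
    exact antitone_iterate_of_le_id hf hab x
  obtain ⟨n, hn, hfix⟩ : ∃ n ≤ Fintype.card γ, IsFixedPt f (f^[n] x) := by
    obtain ⟨a, b, hne, heq⟩ := Fintype.exists_ne_map_eq_of_card_lt
      (fun k : Fin (Fintype.card γ + 1) => f^[k] x) (by simp)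
    rcases lt_or_gt_of_ne (Fin.val_injective.ne hne) with hab | hba
    · exact ⟨a, Nat.lt_succ_iff.mp a.isLt, fixed_of_eq a b hab heq⟩
    · exact ⟨b, Nat.lt_succ_iff.mp b.isLt, fixed_of_eq b a hba heq.symm⟩
  rw [← Nat.sub_add_cancel hn, iterate_add_apply, iterate_fixed hfix]
  exact hfix

section AlgebraicClosure

variable {ι : Type*} [Fintype ι] {α : ι → Type*} [∀ i, BooleanAlgebra (α i)]
  [∀ i, Fintype (α i)] {U : Type*} {V : Type*}

namespace MultiAlg

theorem pstep_le (M : MultiAlg ι α) : M.pstep ≤ id :=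
  fun _ _ => inf_le_left

theorem pcl_le (M : MultiAlg ι α) (R : ∀ i, α i) : M.pcl R ≤ R :=
  Function.antitone_iterate_of_le_id M.pstep_le (Nat.zero_le _) R

theorem relClosedProj_pcl (M : MultiAlg ι α) (R : ∀ i, α i) : M.RelClosedProj (M.pcl R) := by
  intro i j h
  have hfix := Function.isFixedPt_iterate_card_of_le_id M.pstep_le R
  calc M.pcl R j = M.pstep (M.pcl R) j := (congrFun hfix j).symm
    _ ≤ if h' : i ≠ j then M.proj i j h' (M.pcl R i) else ⊤ :=
      inf_le_right.trans (Finset.inf_le (Finset.mem_univ i))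
    _ = M.proj i j h (M.pcl R i) := dif_pos h

end MultiAlg

namespace SeqFormalism

theorem I_mono (F : SeqFormalism ι α U) {R R' : ∀ i, α i} (h : R ≤ R') : F.I R ⊆ F.I R' := by
  rw [← inf_eq_left.mpr h, F.I_inf]
  exact Set.inter_subset_right

theorem I_eq_empty_of_apply_eq_bot (F : SeqFormalism ι α U) {R : ∀ i, α i} {i : ι}
    (h : R i = ⊥) : F.I R = ∅ := by
  rw [F.I_basic]
  simp only [Set.iUnion_eq_empty]
  rintro B ⟨hB, hBR⟩
  exact absurd (le_bot_iff.mp (h ▸ hBR i)) (hB i).1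

theorem mem_I_finsetInf (F : SeqFormalism ι α U) {κ : Type*} (s : Finset κ)
    (g : κ → ∀ i, α i) {p : U × U} (htop : p ∈ F.I ⊤) (h : ∀ k ∈ s, p ∈ F.I (g k)) :
    p ∈ F.I (s.inf g) := by
  induction s using Finset.induction_on with
  | empty => simpa using htop
  | insert k s _ ih =>
    rw [Finset.inf_insert, F.I_inf]
    exact ⟨h k (Finset.mem_insert_self k s), ih fun k hk => h k (Finset.mem_insert_of_mem hk)⟩

end SeqFormalism

theorem not_netTrivIncons_of_isSolution {F : SeqFormalism ι α U} {N : V → V → ∀ i, α i}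
    {u : V → U} (hu : IsSolution F N u) : ¬ NetTrivIncons N := by
  rintro ⟨x, y, hxy, i, hbot⟩
  simpa [F.I_eq_empty_of_apply_eq_bot hbot] using hu x y hxy

variable [Fintype V]

theorem aclStep_le (M : MultiAlg ι α) : aclStep (V := V) M ≤ id := by
  intro N x z
  unfold aclStep
  split_ifs
  · exact le_rfl
  · exact inf_le_left.trans (M.pcl_le _)

theorem acl_le (M : MultiAlg ι α) (N : V → V → ∀ i, α i) : acl M N ≤ N :=
  Function.antitone_iterate_of_le_id (aclStep_le M) (Nat.zero_le _) N

theorem algClosed_acl (M : MultiAlg ι α) (N : V → V → ∀ i, α i) : AlgClosed M (acl M N) := by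
  have hfix (x z : V) (hxz : x ≠ z) :
      acl M N x z = M.pcl (acl M N x z) ⊓ Finset.univ.inf fun y =>
        if x ≠ y ∧ y ≠ z then M.comp (acl M N x y) (acl M N y z) else ⊤ := by
    have := congrFun (congrFun (Function.isFixedPt_iterate_card_of_le_id (aclStep_le M) N) x) z
    exact this.symm.trans (if_neg hxz)
  constructor
  · intro x y z hxy hyz hxz
    have hle := (hfix x z hxz).le.trans (inf_le_right.trans (Finset.inf_le (Finset.mem_univ y)))
    rwa [if_pos ⟨hxy, hyz⟩] at hle
  · intro x z hxz
    have hpcl : acl M N x z = M.pcl (acl M N x z) :=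
      le_antisymm ((hfix x z hxz).le.trans inf_le_left) (M.pcl_le _)
    rw [hpcl]
    exact M.relClosedProj_pcl _

theorem IsSolution.aclStep {F : SeqFormalism ι α U} {N : V → V → ∀ i, α i} {u : V → U}
    (hu : IsSolution F N u) : IsSolution F (aclStep F.M N) u := by
  intro x z hxz
  have htop : (u x, u z) ∈ F.I ⊤ := F.I_mono le_top (hu x z hxz)
  rw [_root_.aclStep, if_neg hxz, F.I_inf, F.I_pcl]
  refine ⟨hu x z hxz, F.mem_I_finsetInf _ _ htop fun y _ => ?_⟩
  split_ifs with hy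
  · exact F.I_comp _ _ ⟨⟨u y, hu x y hy.1, hu y z hy.2⟩, htop⟩
  · exact htop

theorem isSolution_acl_iff {F : SeqFormalism ι α U} {N : V → V → ∀ i, α i} {u : V → U} :
    IsSolution F (acl F.M N) u ↔ IsSolution F N u :=
  ⟨fun hu x y hxy => F.I_mono (acl_le F.M N x y) (hu x y hxy),
    fun hu => Function.Iterate.rec (IsSolution F · u) hu (fun _ => IsSolution.aclStep) _⟩

section Subset

variable {M : MultiAlg ι α} {S : Set (∀ i, α i)}

theorem NetworkOver.aclStep (hPcl : PclClosed M S) (hCI : CompInfClosed M S)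
    {N : V → V → ∀ i, α i} (hN : NetworkOver S N) : NetworkOver S (aclStep M N) := by
  intro x z hxz
  rw [_root_.aclStep, if_neg hxz]
  induction (Finset.univ : Finset V) using Finset.induction_on with
  | empty => simpa using hPcl _ (hN x z hxz)
  | insert y s _ ih =>
    rw [Finset.inf_insert]
    split_ifs with hy
    · rw [inf_left_comm]
      exact hCI _ (hN x y hy.1) _ (hN y z hy.2) _ ih
    · rwa [top_inf_eq]

theorem NetworkOver.acl (hPcl : PclClosed M S) (hCI : CompInfClosed M S)
    {N : V → V → ∀ i, α i} (hN : NetworkOver S N) : NetworkOver S (acl M N) :=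
  Function.Iterate.rec (NetworkOver S) hN (fun _ => NetworkOver.aclStep hPcl hCI) _

end Subset

end AlgebraicClosure

/-- a `↱`-closed, `∘∧`-closed subset over which algebraically consistent
networks are satisfiable is algebraically tractable. -/
theorem stmt_14 {ι : Type*} [Fintype ι] {α : ι → Type*} [∀ i, BooleanAlgebra (α i)]
    [∀ i, Fintype (α i)] {U : Type*} (F : SeqFormalism ι α U)
    (S : Set (∀ i, α i))
    (hPcl : PclClosed F.M S)
    (hCI : CompInfClosed F.M S)
    (hSat : ∀ (V : Type) [Fintype V] (N : V → V → ∀ i, α i),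
      NetworkOver S N → AlgConsistent F.M N → NetSat F N) :
    AlgTractable F S := by
  intro V _ N hN
  constructor
  · rintro ⟨u, hu⟩
    exact not_netTrivIncons_of_isSolution (isSolution_acl_iff.mpr hu)
  · intro hCons
    obtain ⟨u, hu⟩ := hSat V (acl F.M N) (hN.acl hPcl hCI) ⟨algClosed_acl F.M N, hCons⟩
    exact ⟨u, isSolution_acl_iff.mp hu⟩
end

section
/- Let A be a finite tree multi-algebra with plenary anti-tree structure T, and let B be a basic relation of A. If for all edges k → ℓ of T we have B_ℓ ⊆ ↱ᵏˡ(B_k), then B is closed under projection, i.e., B_j ⊆ ↱ⁱʲ(B_i) for all distinct i, j. -/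
open scoped Classical

/-! Walk from `i` and from `j` up to the root and cut the path from `i` at its first node `w` on
the path from `j`: this gives the duplicate-free chain `i → ⋯ → w ← ⋯ ← j` of the plenary condition.
Going up an edge `k → ℓ`, the hypothesis `B_ℓ ≤ ↱ᵏˡ(B_k)` and monotonicity of `↱ᵏˡ` keep `B` below
the composite of projections; going down, the same inequality between atoms says exactly that
`B_k ≤ ↰ᵏˡ(x)` whenever `B_ℓ ≤ x`. So `B_j` lies below the composite along the chain, which
plenarity bounds by `↱ⁱʲ(B_i)`. -/

namespace List

variable {γ : Type*}

theorem exists_eq_append_cons_of_first_mem {l m : List γ} (h : ∃ x ∈ l, x ∈ m) :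
    ∃ l₁ w l₂, l = l₁ ++ w :: l₂ ∧ w ∈ m ∧ ∀ x ∈ l₁, x ∉ m := by
  induction l with
  | nil => simp at h
  | cons a t ih =>
    by_cases ha : a ∈ m
    · exact ⟨[], a, t, rfl, ha, by simp⟩
    · obtain ⟨l₁, w, l₂, rfl, hw, hl₁⟩ := ih (by simpa [ha] using h)
      exact ⟨a :: l₁, w, l₂, rfl, hw, by simpa [ha] using hl₁⟩

theorem IsChain.exists_nodup {R : γ → γ → Prop} {l : List γ} (hl : l.IsChain R) :
    ∃ l' : List γ, l'.IsChain R ∧ l'.Nodup ∧ l'.head? = l.head? ∧ l'.getLast? = l.getLast? := by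
  induction l with
  | nil => exact ⟨[], .nil, nodup_nil, rfl, rfl⟩
  | cons a t ih =>
    obtain ⟨l', hc, hnd, hh, hlast⟩ := ih hl.tail
    by_cases ha : a ∈ l'
    · obtain ⟨p, s, rfl⟩ := append_of_mem ha
      refine ⟨a :: s, hc.suffix (suffix_append _ _), hnd.sublist (sublist_append_right _ _),
        rfl, ?_⟩
      rw [getLast?_cons (l := t), ← hlast]
      simp [getLast?_cons]
    · refine ⟨a :: l', hc.cons ?_, nodup_cons.2 ⟨ha, hnd⟩, rfl, ?_⟩
      · rw [hh]; exact hl.rel_head?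
      · rw [getLast?_cons, getLast?_cons, hlast]

theorem exists_nodup_append_cons_reverse {p q : List γ} (hp : p.Nodup) (hq : q.Nodup)
    (h : ∃ x ∈ p, x ∈ q) : ∃ a b w p' q', p = a ++ w :: p' ∧ q = b ++ w :: q' ∧
      (a ++ w :: b.reverse).Nodup := by
  obtain ⟨a, w, p', rfl, hwq, ha⟩ := exists_eq_append_cons_of_first_mem h
  obtain ⟨b, q', rfl⟩ := append_of_mem hwq
  refine ⟨a, b, w, p', q', rfl, rfl, nodup_append.2 ⟨hp.sublist (sublist_append_left _ _), ?_, ?_⟩⟩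
  · have hbw : (b ++ [w]).Nodup := hq.sublist (by simp)
    rw [← reverse_concat]
    exact nodup_reverse.2 hbw
  · rintro x hx y hy rfl
    exact ha x hx (by simp at hy ⊢; tauto)

end List

namespace MultiAlg

variable {ι : Type*} [Fintype ι] {α : ι → Type*} [∀ i, BooleanAlgebra (α i)]
  [∀ i, Fintype (α i)] (M : MultiAlg ι α) {E : ι → ι → Prop}

theorem proj_mono {i j : ι} (h : i ≠ j) : Monotone (M.proj i j h) := by
  intro r r' hr
  rw [← (sup_eq_right.2 hr : r ⊔ r' = r'), M.proj_sup]
  exact le_sup_left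

theorem le_iproj_of_le_proj {i j : ι} (h : i ≠ j) {b : α i} {b' r : α j} (hb : IsAtomRel b)
    (hb' : IsAtomRel b') (hr : b' ≤ r) (hbb' : b' ≤ M.proj i j h b) : b ≤ M.iproj i j h r :=
  Finset.le_sup (f := id) (Finset.mem_filter.2 ⟨Finset.mem_univ b, hb, b', hb', hr, hbb'⟩)

theorem exists_pathUp {l : List ι} (hc : l.IsChain E) (hnd : l.Nodup) {i w : ι}
    (hi : l.head? = some i) (hw : l.getLast? = some w) (x : α i) :
    ∃ y, M.PathUp E i w l x y := by
  induction hc generalizing i x with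
  | nil => simp at hi
  | singleton a =>
    obtain rfl : a = i := by simpa using hi
    obtain rfl : a = w := by simpa using hw
    exact ⟨x, .refl a x⟩
  | @cons_cons a b l hab _ ih =>
    obtain rfl := Option.some_injective _ hi.symm
    have hne : i ≠ b := fun e => (List.nodup_cons.1 hnd).1 (e ▸ List.mem_cons_self)
    obtain ⟨y, hy⟩ := ih hnd.of_cons rfl (by simpa [List.getLast?_cons] using hw) (M.proj _ _ hne x)
    exact ⟨y, .step hab hne x hy⟩

theorem exists_pathDown {l : List ι} (hc : l.IsChain (fun a b => E b a)) (hnd : l.Nodup)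
    {w j : ι} (hw : l.head? = some w) (hj : l.getLast? = some j) (x : α w) :
    ∃ z, M.PathDown E w j l x z := by
  induction hc generalizing w x with
  | nil => simp at hw
  | singleton a =>
    obtain rfl : a = w := by simpa using hw
    obtain rfl : a = j := by simpa using hj
    exact ⟨x, .refl a x⟩
  | @cons_cons a b l hba _ ih =>
    obtain rfl := Option.some_injective _ hw.symm
    have hne : b ≠ w := fun e => (List.nodup_cons.1 hnd).1 (e ▸ List.mem_cons_self)
    obtain ⟨z, hz⟩ := ih hnd.of_cons rfl (by simpa [List.getLast?_cons] using hj)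
      (M.iproj _ _ hne x)
    exact ⟨z, .step hba hne x hz⟩

variable {M} {B : ∀ i, α i}

theorem PathUp.le_of_le (hB : ∀ k l (hkl : k ≠ l), E k l → B l ≤ M.proj k l hkl (B k))
    {i w : ι} {l : List ι} {x : α i} {y : α w} (hp : M.PathUp E i w l x y) (hx : B i ≤ x) : B w ≤ y := by
  induction hp with
  | refl => exact hx
  | step e h x _ ih => exact ih ((hB _ _ h e).trans (M.proj_mono h hx))

theorem PathDown.le_of_le (hB : ∀ k l (hkl : k ≠ l), E k l → B l ≤ M.proj k l hkl (B k))
    (hBa : M.Basic B) {w j : ι} {l : List ι} {x : α w} {z : α j}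
    (hp : M.PathDown E w j l x z) (hx : B w ≤ x) : B j ≤ z := by
  induction hp with
  | refl => exact hx
  | step e h x _ ih => exact ih (M.le_iproj_of_le_proj h (hBa _) (hBa _) hx (hB _ _ h e))

end MultiAlg

theorem PlenaryAntiTree.exists_nodup_chain_to_root {ι : Type*} [Fintype ι] {α : ι → Type*}
    [∀ i, BooleanAlgebra (α i)] [∀ i, Fintype (α i)] {M : MultiAlg ι α}
    (T : PlenaryAntiTree M) (v : ι) :
    ∃ l : List ι, l.IsChain T.E ∧ l.Nodup ∧ l.head? = some v ∧ l.getLast? = some T.root := by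
  by_cases hv : v = T.root
  · exact ⟨[v], .singleton v, List.nodup_singleton v, rfl, by simp [hv]⟩
  · obtain ⟨l, ⟨hl, hr, hc⟩, -⟩ := T.unique_path v hv
    obtain ⟨l', hc', hnd, hl', hr'⟩ := List.IsChain.exists_nodup hc
    exact ⟨l', hc', hnd, hl'.trans hl, hr'.trans hr⟩

/-- in a tree multi-algebra, a basic relation closed under the
projections along the edges of a plenary anti-tree structure is closed under all
projections. -/
theorem stmt_15 {ι : Type*} [Fintype ι] {α : ι → Type*} [∀ i, BooleanAlgebra (α i)]
    [∀ i, Fintype (α i)] (M : MultiAlg ι α) (T : PlenaryAntiTree M)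
    (B : ∀ i, α i) (hB : M.Basic B)
    (h : ∀ k l (hkl : k ≠ l), T.E k l → B l ≤ M.proj k l hkl (B k)) :
    ∀ i j (hij : i ≠ j), B j ≤ M.proj i j hij (B i) := by
  intro i j hij
  obtain ⟨p, hpc, hpnd, hpi, hpr⟩ := T.exists_nodup_chain_to_root i
  obtain ⟨q, hqc, hqnd, hqj, hqr⟩ := T.exists_nodup_chain_to_root j
  obtain ⟨a, b, w, p', q', rfl, rfl, hnd⟩ := List.exists_nodup_append_cons_reverse hpnd hqnd
    ⟨T.root, List.mem_of_getLast? hpr, List.mem_of_getLast? hqr⟩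
  obtain ⟨y, hup⟩ := M.exists_pathUp (l := a ++ [w]) (w := w) (hpc.prefix ⟨p', by simp⟩)
    (hnd.sublist (by simp)) (by simpa using hpi) (by simp) (B i)
  obtain ⟨z, hdown⟩ := M.exists_pathDown (l := w :: b.reverse) (j := j)
    (by rw [← List.reverse_concat]; exact List.isChain_reverse.2 (hqc.prefix ⟨q', by simp⟩))
    (hnd.sublist (by simp)) rfl
    (by rw [← List.reverse_concat, List.getLast?_reverse]; simpa using hqj) y
  exact (hdown.le_of_le h hB (hup.le_of_le h le_rfl)).trans
    (T.plenary i j hij (B i) (hB i) w _ _ y z hup hdown (by simpa using hnd))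
end
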